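/- Let I be a symmetric monomial ideal with Λ(I) = {λ} for a single partition λ (a symmetric principal monomial ideal). If ℓ(λ) ≤ ⌊n/2⌋ and λ_1 > λ_2, then with c = λ_1 − 1 and p = 2ℓ(λ), the monomials f = (x_1⋯x_{ℓ(λ)})^c and g = (x_{ℓ(λ)+1}⋯x_p)^c satisfy f ∈ I:(x_1,…,x_{ℓ(λ)}), g ∈ I:(x_{ℓ(λ)+1},…,x_p), and fg ∉ I. -/

import Mathlib

open MvPolynomial

/-!
A monomial `x^d` lies in `I_λ` exactly when `d` dominates some rearrangement of `λ`.
Since `λ₁` is the unique largest part, `(x_1⋯x_ℓ)^c` with `c = λ₁ - 1` dominates every part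
except `λ₁` on a block of `ℓ` variables, and multiplying by any variable of the block supplies
the missing exponent `λ₁` there. The same applies to the shifted block `x_{ℓ+1}, …, x_{2ℓ}`.
On the other hand, every exponent of `fg` is at most `c < λ₁`, so no rearrangement of `λ` fits.
-/

/-- `e` carries the support of `λ` onto a block on which `d` is at least `λ_{j₀} - 1`;
moving the unique largest part `λ_{j₀}` onto the point `i` of the block where `d` reaches it
gives the rearrangement. -/
theorem exists_perm_le_of_block {σ : Type*} [DecidableEq σ] (lam : σ → ℕ) {j₀ : σ}
    (hmax : ∀ j ≠ j₀, lam j < lam j₀) (e : Equiv.Perm σ) (d : σ → ℕ)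
    (hd : ∀ j, lam (e.symm j) ≠ 0 → lam j₀ - 1 ≤ d j) {i : σ} (hdi : lam j₀ ≤ d i) :
    ∃ π : Equiv.Perm σ, ∀ j, lam (π j) ≤ d j := by
  refine ⟨e.symm.trans (Equiv.swap j₀ (e.symm i)), fun j => ?_⟩
  simp only [Equiv.trans_apply]
  by_cases hji : j = i
  · subst hji
    rwa [Equiv.swap_apply_right]
  have hne : e.symm j ≠ e.symm i := e.symm.injective.ne hji
  by_cases hj₀ : e.symm j = j₀
  · rw [hj₀, Equiv.swap_apply_left]
    have hlt := hmax (e.symm i) (hj₀ ▸ hne.symm)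
    have := hd j (by rw [hj₀]; omega)
    omega
  · rw [Equiv.swap_apply_of_ne_of_ne hj₀ hne]
    have hlt := hmax _ hj₀
    by_cases hz : lam (e.symm j) = 0
    · omega
    · have := hd j hz
      omega

theorem Fin.val_sub_lt_iff {n : ℕ} {a : Fin n} (ha : 2 * a.val ≤ n) (j : Fin n) :
    (j - a).val < a.val ↔ a.val ≤ j.val ∧ j.val < 2 * a.val := by
  rcases le_or_gt a.val j.val with hj | hj
  · rw [Fin.coe_sub_iff_le.mpr (Fin.le_def.mpr hj)]
    omega
  · rw [Fin.coe_sub_iff_lt.mpr (Fin.lt_def.mpr hj)]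
    omega

theorem prod_X_pow_eq_monomial_indicator {σ k : Type*} [CommSemiring k] [DecidableEq σ]
    (s : Finset σ) (c : ℕ) :
    (∏ i ∈ s, X i) ^ c = monomial (Finsupp.indicator s fun _ _ => c) (1 : k) := by
  rw [← Finset.prod_pow, prod_X_pow]

section SymmetricMonomialIdeal

variable {σ : Type*} [Fintype σ] (k : Type*) [CommSemiring k]

noncomputable def symmetricMonomialIdeal (lam : σ → ℕ) : Ideal (MvPolynomial σ k) :=
  Ideal.span {f | ∃ π : Equiv.Perm σ, f = ∏ i : σ, X i ^ lam (π i)}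

variable [Nontrivial k] {k} {lam : σ → ℕ}

theorem monomial_mem_symmetricMonomialIdeal_iff (d : σ →₀ ℕ) :
    monomial d (1 : k) ∈ symmetricMonomialIdeal k lam ↔
      ∃ π : Equiv.Perm σ, ∀ i, lam (π i) ≤ d i := by
  classical
  have hgens : {f | ∃ π : Equiv.Perm σ, f = ∏ i : σ, (X i : MvPolynomial σ k) ^ lam (π i)} =
      (fun s => monomial s (1 : k)) ''
        Set.range fun π : Equiv.Perm σ => Finsupp.indicator Finset.univ fun i _ => lam (π i) := by
    ext f
    simp [prod_X_pow, eq_comm]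
  rw [symmetricMonomialIdeal, hgens, mem_ideal_span_monomial_image,
    support_monomial, if_neg one_ne_zero]
  simp [Finsupp.le_def]

theorem monomial_notMem_symmetricMonomialIdeal {d : σ →₀ ℕ} (j₀ : σ)
    (hd : ∀ j, d j < lam j₀) : monomial d (1 : k) ∉ symmetricMonomialIdeal k lam := by
  rw [monomial_mem_symmetricMonomialIdeal_iff]
  rintro ⟨π, hπ⟩
  have hle := hπ (π.symm j₀)
  rw [Equiv.apply_symm_apply] at hle
  exact (hd _).not_ge hle

theorem prod_X_pow_mem_colon_of_block [DecidableEq σ] {j₀ : σ}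
    (hmax : ∀ j ≠ j₀, lam j < lam j₀) (e : Equiv.Perm σ) (P : σ → Prop) [DecidablePred P]
    (hP : ∀ j, P j ↔ lam (e.symm j) ≠ 0) :
    (∏ i ∈ Finset.univ.filter P, X i) ^ (lam j₀ - 1) ∈
      (symmetricMonomialIdeal k lam).colon
        ((Ideal.span {x | ∃ i, P i ∧ x = X i} : Ideal (MvPolynomial σ k)) :
          Set (MvPolynomial σ k)) := by
  rw [Ideal.colon_span, Submodule.mem_colon]
  rintro _ ⟨i, hi, rfl⟩
  rw [prod_X_pow_eq_monomial_indicator, smul_eq_mul, X, monomial_mul, one_mul,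
    monomial_mem_symmetricMonomialIdeal_iff]
  have hj₀ : lam j₀ ≠ 0 := by
    by_cases h : e.symm i = j₀
    · exact h ▸ (hP i).mp hi
    · exact Nat.ne_zero_of_lt (hmax _ h)
  refine exists_perm_le_of_block lam hmax e _ (fun j hj => ?_) (i := i) ?_
  · simp [Finsupp.indicator_apply, (hP j).mpr hj]
  · simp only [Finsupp.coe_add, Pi.add_apply, Finsupp.indicator_apply, Finset.mem_filter,
      Finset.mem_univ, hi, and_self, ↓reduceDIte, Finsupp.single_eq_same]
    omega

end SymmetricMonomialIdeal

/-- let `I = I_λ` be the symmetric principal monomial ideal of a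
partition `λ` (antitone, with exactly `L` nonzero parts, `ℓ(λ) = L`). If
`L ≤ ⌊n/2⌋` and `λ₁ > λ₂`, then with `c = λ₁ − 1` and `p = 2L`, the monomials
`f = (x_1⋯x_L)^c` and `g = (x_{L+1}⋯x_p)^c` satisfy `f ∈ I:(x_1,…,x_L)`,
`g ∈ I:(x_{L+1},…,x_p)`, and `fg ∉ I`. -/
theorem stmt13 {k : Type*} [Field k] {n : ℕ} (hn : 2 ≤ n)
    (lam : Fin n → ℕ) (hanti : Antitone lam)
    (L : ℕ)
    (hL1 : ∀ i : Fin n, i.val < L → lam i ≠ 0)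
    (hL2 : ∀ i : Fin n, L ≤ i.val → lam i = 0)
    (hLn : L ≤ n / 2)
    (hlam : lam ⟨1, by omega⟩ < lam ⟨0, by omega⟩)
    (I : Ideal (MvPolynomial (Fin n) k))
    (hI : I = Ideal.span
      {f | ∃ π : Equiv.Perm (Fin n), f = ∏ i : Fin n, X i ^ lam (π i)}) :
    ((∏ i ∈ Finset.univ.filter (fun i : Fin n => i.val < L), X i)
        ^ (lam ⟨0, by omega⟩ - 1)
      ∈ Submodule.colon I ((Ideal.span {x | ∃ i : Fin n, i.val < L ∧ x = X i} :
          Ideal (MvPolynomial (Fin n) k)) : Set (MvPolynomial (Fin n) k)))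
    ∧ ((∏ i ∈ Finset.univ.filter (fun i : Fin n => L ≤ i.val ∧ i.val < 2 * L), X i)
        ^ (lam ⟨0, by omega⟩ - 1)
      ∈ Submodule.colon I
          ((Ideal.span {x | ∃ i : Fin n, L ≤ i.val ∧ i.val < 2 * L ∧ x = X i} :
            Ideal (MvPolynomial (Fin n) k)) : Set (MvPolynomial (Fin n) k)))
    ∧ ((∏ i ∈ Finset.univ.filter (fun i : Fin n => i.val < L), X i)
          ^ (lam ⟨0, by omega⟩ - 1) *
        (∏ i ∈ Finset.univ.filter (fun i : Fin n => L ≤ i.val ∧ i.val < 2 * L), X i)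
          ^ (lam ⟨0, by omega⟩ - 1)
        ∉ I) := by
  change I = symmetricMonomialIdeal k lam at hI
  subst hI
  have : NeZero n := ⟨by omega⟩
  have hmax : ∀ j ≠ (⟨0, by omega⟩ : Fin n), lam j < lam ⟨0, by omega⟩ := fun j hj =>
    (hanti (Fin.le_def.mpr (Nat.one_le_iff_ne_zero.mpr (Fin.val_ne_of_ne hj)))).trans_lt hlam
  have hsupp : ∀ j : Fin n, j.val < L ↔ lam j ≠ 0 := fun j =>
    ⟨hL1 j, fun h => not_le.mp (mt (hL2 j) h)⟩
  refine ⟨prod_X_pow_mem_colon_of_block hmax 1 _ hsupp, ?_, ?_⟩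
  · have hshift : ∀ j : Fin n, (L ≤ j.val ∧ j.val < 2 * L) ↔ lam (j - ⟨L, by omega⟩) ≠ 0 :=
      fun j => (Fin.val_sub_lt_iff (a := ⟨L, by omega⟩) (show 2 * L ≤ n by omega) j).symm.trans
        (hsupp _)
    simpa only [and_assoc] using prod_X_pow_mem_colon_of_block (k := k) hmax
      (Equiv.subRight (⟨L, by omega⟩ : Fin n)).symm _ hshift
  · rw [prod_X_pow_eq_monomial_indicator, prod_X_pow_eq_monomial_indicator, monomial_mul,
      one_mul]
    refine monomial_notMem_symmetricMonomialIdeal ⟨0, by omega⟩ fun j => ?_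
    simp only [Finsupp.coe_add, Pi.add_apply, Finsupp.indicator_apply, Finset.mem_filter,
      Finset.mem_univ, true_and]
    split_ifs <;> omega
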